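/- Let G be a graph with a NAC-coloring δ, and let u, v, w be vertices with uv, vw ∈ E(G) such that u and w lie in the same connected component of the subgraph induced by the edges of one color class. Then δ(uv) = δ(vw). -/

import Mathlib

open SimpleGraph

def IsNACColoring {V : Type*} (G : SimpleGraph V) (δ : Sym2 V → Bool) : Prop :=
  (∃ e ∈ G.edgeSet, δ e = true) ∧ (∃ e ∈ G.edgeSet, δ e = false) ∧
  ∀ ⦃u : V⦄ (w : G.Walk u u), w.IsCycle →
    ∀ b : Bool, (w.edges.countP fun e => δ e == b) ≠ 1

/-- The spanning subgraph of `G` consisting of the edges of color `c`. -/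
def colorSubgraph {V : Type*} (G : SimpleGraph V) (δ : Sym2 V → Bool) (c : Bool) :
    SimpleGraph V :=
  SimpleGraph.fromEdgeSet {e | e ∈ G.edgeSet ∧ δ e = c}

/-!
If `δ(uv) ≠ δ(vw)`, one of the two edges, say `uv`, has the color `c`, so `v` joins the
component of `u` and `w` in the `c`-colored subgraph. A path of color `c` from `w` to `v`
closed up by the edge `vw` is then a cycle with exactly one edge of color `δ(vw)`.
-/

section

variable {V : Type*} {G : SimpleGraph V} {δ : Sym2 V → Bool} {c : Bool}

lemma colorSubgraph_adj {x y : V} :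
    (colorSubgraph G δ c).Adj x y ↔ G.Adj x y ∧ δ s(x, y) = c := by
  simp only [colorSubgraph, fromEdgeSet_adj, Set.mem_ofPred_eq, mem_edgeSet]
  exact ⟨fun ⟨h, _⟩ => h, fun h => ⟨h, h.1.ne⟩⟩

lemma colorSubgraph_le : colorSubgraph G δ c ≤ G :=
  fun _ _ h => (colorSubgraph_adj.mp h).1

lemma color_eq_of_mem_edges_colorSubgraph {x y : V} (p : (colorSubgraph G δ c).Walk x y)
    {e : Sym2 V} (he : e ∈ p.edges) : δ e = c := by
  have h := p.edges_subset_edgeSet he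
  rw [colorSubgraph, edgeSet_fromEdgeSet] at h
  exact h.1.2

lemma IsNACColoring.not_reachable_colorSubgraph_of_color_ne (hδ : IsNACColoring G δ) {x y : V}
    (hxy : G.Adj x y) (hc : δ s(x, y) ≠ c) : ¬(colorSubgraph G δ c).Reachable x y := by
  rintro hr
  obtain ⟨p, hp⟩ := hr.symm.exists_isPath
  have hcol : ∀ e ∈ p.edges, δ e ≠ δ s(x, y) := fun e he =>
    (color_eq_of_mem_edges_colorSubgraph p he).trans_ne hc.symm
  have hcycle : (Walk.cons hxy (p.mapLe colorSubgraph_le)).IsCycle := by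
    rw [Walk.cons_isCycle_iff, Walk.isPath_mapLe, Walk.edges_mapLe_eq_edges]
    exact ⟨hp, fun hmem => hcol _ hmem rfl⟩
  apply hδ.2.2 _ hcycle (δ s(x, y))
  rw [Walk.edges_cons, Walk.edges_mapLe_eq_edges, List.countP_cons_of_pos (by simp),
    List.countP_eq_zero.mpr (by simpa using hcol)]

end

/-- in a NAC-coloring, if `uv` and `vw` are edges and `u`, `w` lie
in the same connected component of the subgraph of the edges of some color `c`, then
`uv` and `vw` have the same color. -/
theorem path_endpoints_in_component_same_color {V : Type*} (G : SimpleGraph V)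
    (δ : Sym2 V → Bool) (hδ : IsNACColoring G δ) (u v w : V) (c : Bool)
    (huv : G.Adj u v) (hvw : G.Adj v w)
    (hreach : (colorSubgraph G δ c).Reachable u w) :
    δ s(u, v) = δ s(v, w) := by
  by_contra hne
  rcases Bool.eq_or_eq_not (δ s(u, v)) c with huv_c | huv_c
  · have hvw_c : δ s(v, w) ≠ c := huv_c ▸ Ne.symm hne
    have hvw_reach : (colorSubgraph G δ c).Reachable v w :=
      (colorSubgraph_adj.mpr ⟨huv, huv_c⟩).reachable.symm.trans hreach
    exact hδ.not_reachable_colorSubgraph_of_color_ne hvw hvw_c hvw_reach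
  · have hvw_c : δ s(v, w) = c := by simpa [huv_c] using Ne.symm hne
    have huv_reach : (colorSubgraph G δ c).Reachable u v :=
      hreach.trans (colorSubgraph_adj.mpr ⟨hvw, hvw_c⟩).reachable.symm
    exact hδ.not_reachable_colorSubgraph_of_color_ne huv (by simp [huv_c]) huv_reach
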